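/- Let two distinct records i₁ ≠ i₂ both hold the same low-frequent item d* ≠ d, and let their contributions to the same row j at column h_j(d) be X₁ and X₂, where the shared hash function h_j maps d* uniformly to {1,...,m} (so both records' encoding bits at position h_j(d) equal the SAME random sign H, with H = +1 iff h_j(d*) = h_j(d), an event of probability 1/m), and the perturbations and row selections of the two records are independent of each other and of H. Then Cov(X₁, X₂) = 1/m − 1/m², where Xₗ = k·((c_ε·Perturbₗ(H)+1)/2)·1{Jₗ = j}. -/
import Mathlib

/-- Case (3) of Lemma 2: two distinct records both hold the same low-frequent item
`d* ≠ d`. Their encoding bits at position `h_j(d)` equal the same random sign `H`, with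
`Pr[H = +1] = 1/m` (the hash collision event `h_j(d*) = h_j(d)`); the perturbations and
row selections of the two records are independent of each other and of `H`. With
`Xₗ = k·((c_ε·Perturbₗ(H)+1)/2)·1{Jₗ = j}`, the conditional means given `H = ±1` are
`μ₊ = k·(p·(c+1)/2 + q·(1-c)/2)·(1/k)` and `μ₋ = k·(p·(1-c)/2 + q·(1+c)/2)·(1/k)`, and
`Cov(X₁,X₂) = E_H[E[X₁|H]E[X₂|H]] - E[X₁]E[X₂] = 1/m - 1/m²`. -/
theorem stmt11 (ε c p q : ℝ) (hε : 0 < ε) (m k : ℕ) (hm : 1 ≤ m) (hk : 1 ≤ k)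
    (hc : c = (Real.exp (ε/2) + 1) / (Real.exp (ε/2) - 1))
    (hp : p = Real.exp (ε/2) / (Real.exp (ε/2) + 1))
    (hq : q = 1 / (Real.exp (ε/2) + 1))
    (μplus μminus : ℝ)
    (hμp : μplus = (k : ℝ) * (p * ((c + 1) / 2) + q * ((1 - c) / 2)) * (1 / (k : ℝ)))
    (hμm : μminus = (k : ℝ) * (p * ((1 - c) / 2) + q * ((1 + c) / 2)) * (1 / (k : ℝ))) :
    ((1 / (m : ℝ)) * (μplus * μplus) + (1 - 1 / (m : ℝ)) * (μminus * μminus))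
      - ((1 / (m : ℝ)) * μplus + (1 - 1 / (m : ℝ)) * μminus) ^ 2
      = 1 / (m : ℝ) - 1 / (m : ℝ) ^ 2 := by
  have he1 : Real.exp (ε/2) > 1 := by
    have := Real.exp_pos (ε/2)
    nlinarith [Real.add_one_le_exp (ε/2), hε]
  have hne : Real.exp (ε/2) - 1 ≠ 0 := by linarith
  have hne2 : Real.exp (ε/2) + 1 ≠ 0 := by positivity
  have hkne : (k : ℝ) ≠ 0 := by positivity
  have h1 : p * ((c + 1) / 2) + q * ((1 - c) / 2) = 1 := by
    subst hc hp hq; field_simp; ring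
  have h2 : p * ((1 - c) / 2) + q * ((1 + c) / 2) = 0 := by
    subst hc hp hq; field_simp; ring
  have hμp1 : μplus = 1 := by rw [hμp, h1]; field_simp
  have hμm0 : μminus = 0 := by rw [hμm, h2]; ring
  rw [hμp1, hμm0]; ring
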